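/- Let A ∈ ℝ^{n×d} have a singular value decomposition A = U Σ Vᵀ, let ε > 0, let j ∈ {1,…,d−1}, and let m be an integer with m ≥ j + ⌈j/ε⌉ − 1 and m ≤ min(n,d) − 1. Let X ∈ ℝ^{d×j} be a matrix with orthonormal columns and let Y ∈ ℝ^{d×(d−j)} be a matrix with orthonormal columns whose column space is the orthogonal complement of the column space of X. Then 0 ≤ ‖AXXᵀ − A^(m)XXᵀ‖_F² ≤ ε · ‖AY‖_F². -/

import Mathlib

/-!
Write `W = VᵀX` and `Z = VᵀY`. Since `[X Y]` is orthogonal, so is `[W Z]`, hence the squared row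
norms `r_l` of `W` and `ρ_l` of `Z` satisfy `r_l + ρ_l = 1` and `∑ r_l = j`. Orthogonal invariance
of the Frobenius norm turns the two sides into weighted sums of squared singular values:
`‖(A - A^(m)) X Xᵀ‖² = ∑_{l ≥ m} σ_l² r_l ≤ j σ_m²` and `‖AY‖² = ∑_l σ_l² ρ_l`. As `σ` is
nonincreasing and the weights `ρ_l ∈ [0, 1]` sum to `d - j`, the latter is at least
`∑_{l ≥ j} σ_l² ≥ (m + 1 - j) σ_m²`, and the condition on `m` gives `j ≤ ε (m + 1 - j)`.
-/

open Matrix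

/-- Identify a plain vector in `Fin d → ℝ` with a point of Euclidean space `ℝ^d`. -/
noncomputable def toEuc {d : ℕ} (v : Fin d → ℝ) : EuclideanSpace ℝ (Fin d) :=
  (WithLp.equiv 2 (Fin d → ℝ)).symm v

/-- Squared Euclidean distance from a point (given as a row vector) to a set. -/
noncomputable def rowDistSq {d : ℕ} (p : Fin d → ℝ) (C : Set (EuclideanSpace ℝ (Fin d))) : ℝ :=
  (Metric.infDist (toEuc p) C) ^ 2

/-- `dist²(A, C)`: sum of squared Euclidean distances of the rows of `A` to the set `C`. -/
noncomputable def matDistSq {n d : ℕ} (A : Matrix (Fin n) (Fin d) ℝ)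
    (C : Set (EuclideanSpace ℝ (Fin d))) : ℝ :=
  ∑ i, rowDistSq (A i) C

/-- Squared Frobenius norm of a matrix. -/
noncomputable def frobSq {n d : ℕ} (A : Matrix (Fin n) (Fin d) ℝ) : ℝ :=
  ∑ i, ∑ j, (A i j) ^ 2

/-- The rectangular diagonal `n × d` matrix with diagonal entries `σ 0, σ 1, …`. -/
def svdDiag (n d : ℕ) (σ : ℕ → ℝ) : Matrix (Fin n) (Fin d) ℝ :=
  Matrix.of fun i j => if (i : ℕ) = (j : ℕ) then σ (i : ℕ) else 0

/-- The truncation keeping only the first `m` diagonal entries of `svdDiag n d σ`. -/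
def svdDiagTrunc (n d m : ℕ) (σ : ℕ → ℝ) : Matrix (Fin n) (Fin d) ℝ :=
  Matrix.of fun i j => if (i : ℕ) = (j : ℕ) ∧ (i : ℕ) < m then σ (i : ℕ) else 0

/-- The column space of a matrix, as a subspace of Euclidean space. -/
noncomputable def colSpace {d c : ℕ} (X : Matrix (Fin d) (Fin c) ℝ) :
    Submodule ℝ (EuclideanSpace ℝ (Fin d)) :=
  Submodule.span ℝ (Set.range fun k => toEuc fun i => X i k)

open Finset

section Frobenius

variable {n n' d c : ℕ}

lemma frobSq_nonneg (A : Matrix (Fin n) (Fin d) ℝ) : 0 ≤ frobSq A :=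
  sum_nonneg fun _ _ => sum_nonneg fun _ _ => sq_nonneg _

lemma frobSq_eq_trace (A : Matrix (Fin n) (Fin d) ℝ) : frobSq A = (Aᵀ * A).trace := by
  simp only [frobSq, trace, Matrix.diag, mul_apply, transpose_apply, sq]
  exact sum_comm

lemma frobSq_mul_of_transpose_mul_self_eq_one {U : Matrix (Fin n) (Fin n') ℝ} (hU : Uᵀ * U = 1)
    (B : Matrix (Fin n') (Fin d) ℝ) : frobSq (U * B) = frobSq B := by
  rw [frobSq_eq_trace, frobSq_eq_trace, transpose_mul, Matrix.mul_assoc, ← Matrix.mul_assoc Uᵀ,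
    hU, Matrix.one_mul]

lemma frobSq_mul_transpose_of_transpose_mul_self_eq_one {X : Matrix (Fin d) (Fin c) ℝ}
    (hX : Xᵀ * X = 1) (B : Matrix (Fin n) (Fin c) ℝ) : frobSq (B * Xᵀ) = frobSq B := by
  rw [frobSq_eq_trace, frobSq_eq_trace, transpose_mul, transpose_transpose, Matrix.mul_assoc,
    trace_mul_comm]
  simp only [Matrix.mul_assoc, hX, Matrix.mul_one]

lemma frobSq_of_transpose_mul_self_eq_one {X : Matrix (Fin d) (Fin c) ℝ} (hX : Xᵀ * X = 1) :
    frobSq X = c := by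
  simp [frobSq_eq_trace, hX]

lemma frobSq_mul_of_transpose_mul_self_eq_diagonal {D : Matrix (Fin n) (Fin d) ℝ} {g : Fin d → ℝ}
    (hD : Dᵀ * D = diagonal g) (W : Matrix (Fin d) (Fin c) ℝ) :
    frobSq (D * W) = ∑ l, g l * ∑ k, W l k ^ 2 := by
  rw [frobSq_eq_trace, transpose_mul, Matrix.mul_assoc, ← Matrix.mul_assoc Dᵀ, hD]
  simp only [trace, diag_apply, mul_apply, transpose_apply, diagonal_apply, ite_mul, zero_mul,
    sum_ite_eq, mem_univ, ↓reduceIte, mul_sum]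
  rw [sum_comm]
  exact sum_congr rfl fun _ _ => sum_congr rfl fun _ _ => by ring

end Frobenius

section SVD

variable {n d : ℕ}

lemma svdDiag_transpose_mul_self (s : ℕ → ℝ) :
    (svdDiag n d s)ᵀ * svdDiag n d s =
      diagonal fun l : Fin d => (if (l : ℕ) < n then s l else 0) ^ 2 := by
  ext l l'
  simp only [mul_apply, transpose_apply, svdDiag, of_apply, diagonal_apply]
  by_cases hl : (l : ℕ) < n
  · rw [sum_eq_single ⟨l, hl⟩ (fun i _ hi => by simp [Fin.ext_iff] at hi; simp [hi])
      (by simp)]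
    by_cases hll' : l = l'
    · subst hll'; simp [hl, sq]
    · simp [hll', Fin.val_ne_of_ne]
  · have hi : ∀ i : Fin n, (i : ℕ) ≠ l := fun i h => hl (h ▸ i.isLt)
    simp [hi, hl]

lemma frobSq_svdDiag_mul {c : ℕ} (s : ℕ → ℝ) (W : Matrix (Fin d) (Fin c) ℝ) :
    frobSq (svdDiag n d s * W) =
      ∑ l : Fin d, (if (l : ℕ) < n then s l else 0) ^ 2 * ∑ k, W l k ^ 2 :=
  frobSq_mul_of_transpose_mul_self_eq_diagonal (svdDiag_transpose_mul_self s) W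

lemma svdDiag_sub_svdDiagTrunc (m : ℕ) (σ : ℕ → ℝ) :
    svdDiag n d σ - svdDiagTrunc n d m σ = svdDiag n d fun i => if m ≤ i then σ i else 0 := by
  ext i l
  simp only [Matrix.sub_apply, svdDiag, svdDiagTrunc, of_apply]
  split_ifs <;> first | omega | simp

variable {σ : ℕ → ℝ}

lemma ite_lt_nonneg (hσ0 : ∀ i, i < min n d → 0 ≤ σ i) (l : Fin d) :
    0 ≤ if (l : ℕ) < n then σ l else 0 := by
  split_ifs with hl
  · exact hσ0 l (lt_min hl l.2)
  · rfl

lemma antitone_ite_lt (hσ0 : ∀ i, i < min n d → 0 ≤ σ i)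
    (hσa : ∀ i i', i ≤ i' → i' < min n d → σ i' ≤ σ i) :
    Antitone fun l : Fin d => if (l : ℕ) < n then σ l else 0 := by
  intro l l' hll'
  by_cases hl' : (l' : ℕ) < n
  · simpa [hl', (Fin.le_def.1 hll').trans_lt hl'] using hσa l l' hll' (lt_min hl' l'.2)
  · simpa [hl'] using ite_lt_nonneg hσ0 l

end SVD

section Orthonormal

variable {d j j' : ℕ}

lemma transpose_mul_eq_zero_of_colSpace_le_orthogonal {X : Matrix (Fin d) (Fin j) ℝ}
    {Y : Matrix (Fin d) (Fin j') ℝ} (h : colSpace Y ≤ (colSpace X)ᗮ) : Xᵀ * Y = 0 := by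
  ext k l
  have hx : (toEuc fun i => X i k) ∈ colSpace X := Submodule.subset_span ⟨k, rfl⟩
  have hy : (toEuc fun i => Y i l) ∈ (colSpace X)ᗮ := h (Submodule.subset_span ⟨l, rfl⟩)
  rw [mul_apply, Matrix.zero_apply, ← hy _ hx]
  simp [PiLp.inner_apply, toEuc, mul_comm]

lemma mul_transpose_add_mul_transpose_eq_one (hd : d = j + j') {X : Matrix (Fin d) (Fin j) ℝ}
    {Y : Matrix (Fin d) (Fin j') ℝ} (hX : Xᵀ * X = 1) (hY : Yᵀ * Y = 1) (hXY : Xᵀ * Y = 0) :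
    X * Xᵀ + Y * Yᵀ = 1 := by
  have hYX : Yᵀ * X = 0 := by simpa using congrArg transpose hXY
  have hblock : fromRows Xᵀ Yᵀ * fromCols X Y = 1 := by
    rw [fromRows_mul_fromCols, hX, hY, hXY, hYX, fromBlocks_one]
  rw [← fromCols_mul_fromRows]
  exact (fromCols_mul_fromRows_eq_one_comm ((finCongr hd).trans finSumFinEquiv.symm) X Y Xᵀ Yᵀ).2
    hblock

lemma sum_sq_add_sum_sq_eq_one {d' : ℕ} {V : Matrix (Fin d) (Fin d') ℝ} (hV : Vᵀ * V = 1)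
    {X : Matrix (Fin d) (Fin j) ℝ} {Y : Matrix (Fin d) (Fin j') ℝ} (hXY : X * Xᵀ + Y * Yᵀ = 1)
    (l : Fin d') : ∑ k, (Vᵀ * X) l k ^ 2 + ∑ k, (Vᵀ * Y) l k ^ 2 = 1 := by
  have h : (Vᵀ * X) * (Vᵀ * X)ᵀ + (Vᵀ * Y) * (Vᵀ * Y)ᵀ = 1 := by
    simp only [transpose_mul, transpose_transpose, Matrix.mul_assoc, ← Matrix.mul_add]
    rw [← Matrix.mul_assoc X, ← Matrix.mul_assoc Y, ← Matrix.add_mul, hXY, Matrix.one_mul, hV]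
  generalize Vᵀ * X = W at h
  generalize Vᵀ * Y = Z at h
  simpa [mul_apply, sq] using congrFun₂ h l l

end Orthonormal

lemma sum_le_sum_mul_of_le_of_ge {ι : Type*} [Fintype ι] [DecidableEq ι] (s : Finset ι)
    {g w : ι → ℝ} (c : ℝ) (hs : ∀ i ∈ s, g i ≤ c) (hsc : ∀ i ∉ s, c ≤ g i)
    (hw0 : ∀ i, 0 ≤ w i) (hw1 : ∀ i, w i ≤ 1) (hw : ∑ i, w i = #s) :
    ∑ i ∈ s, g i ≤ ∑ i, g i * w i := by
  have key : ∀ i, 0 ≤ (g i - c) * (w i - if i ∈ s then 1 else 0) := by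
    intro i
    by_cases hi : i ∈ s
    · simpa [hi] using
        mul_nonneg_of_nonpos_of_nonpos (sub_nonpos.2 (hs i hi)) (sub_nonpos.2 (hw1 i))
    · simpa [hi] using mul_nonneg (sub_nonneg.2 (hsc i hi)) (hw0 i)
  have hsum := sum_nonneg fun i (_ : i ∈ univ) => key i
  simp only [mul_sub, sub_mul, sum_sub_distrib, ← mul_sum, mul_ite, mul_one, mul_zero,
    sum_ite_mem, univ_inter, hw, sum_const, nsmul_eq_mul] at hsum
  linarith

section Ceil

variable {j m : ℕ} {ε : ℝ}

lemma le_of_add_ceil_div_sub_one_le (hε : 0 < ε) (h : j + ⌈(j : ℝ) / ε⌉₊ - 1 ≤ m) : j ≤ m := by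
  rcases Nat.eq_zero_or_pos j with rfl | hj
  · exact Nat.zero_le m
  · have : 1 ≤ ⌈(j : ℝ) / ε⌉₊ := Nat.one_le_ceil_iff.2 (by positivity)
    omega

lemma le_mul_of_add_ceil_div_sub_one_le (hε : 0 < ε) (h : j + ⌈(j : ℝ) / ε⌉₊ - 1 ≤ m) :
    (j : ℝ) ≤ ε * (m + 1 - j : ℕ) := by
  have hceil : ⌈(j : ℝ) / ε⌉₊ ≤ m + 1 - j := by omega
  rw [← div_le_iff₀' hε]
  exact (Nat.le_ceil _).trans (by exact_mod_cast hceil)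

end Ceil

lemma sum_sq_mul_le_of_antitone {d j m : ℕ} {ε : ℝ} (hε : 0 ≤ ε) (hjm : j ≤ m) (hmd : m < d)
    (hεjm : (j : ℝ) ≤ ε * (m + 1 - j : ℕ)) {τ r : Fin d → ℝ} (hτ0 : ∀ l, 0 ≤ τ l)
    (hτ : Antitone τ) (hr0 : ∀ l, 0 ≤ r l) (hr1 : ∀ l, r l ≤ 1) (hr : ∑ l, r l = j) :
    ∑ l : Fin d, (if m ≤ (l : ℕ) then τ l else 0) ^ 2 * r l ≤ ε * ∑ l, τ l ^ 2 * (1 - r l) := by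
  set m' : Fin d := ⟨m, hmd⟩
  set j' : Fin d := ⟨j, hjm.trans_lt hmd⟩
  have hsq : ∀ {l l'}, l ≤ l' → τ l' ^ 2 ≤ τ l ^ 2 := fun h => pow_le_pow_left₀ (hτ0 _) (hτ h) 2
  have head : ∑ l : Fin d, (if m ≤ (l : ℕ) then τ l else 0) ^ 2 * r l ≤ τ m' ^ 2 * j := by
    rw [← hr, mul_sum]
    refine sum_le_sum fun l _ => mul_le_mul_of_nonneg_right ?_ (hr0 l)
    split_ifs with hl
    · exact hsq (Fin.le_def.2 hl)
    · simp [sq_nonneg]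
  have tail : ((m + 1 - j : ℕ) : ℝ) * τ m' ^ 2 ≤ ∑ l, τ l ^ 2 * (1 - r l) :=
    calc ((m + 1 - j : ℕ) : ℝ) * τ m' ^ 2 = #(Icc j' m') • τ m' ^ 2 := by
          rw [Fin.card_Icc, nsmul_eq_mul]
      _ ≤ ∑ l ∈ Icc j' m', τ l ^ 2 := card_nsmul_le_sum _ _ _ fun l hl => hsq (mem_Icc.1 hl).2
      _ ≤ ∑ l ∈ Ici j', τ l ^ 2 :=
          sum_le_sum_of_subset_of_nonneg Icc_subset_Ici_self fun _ _ _ => sq_nonneg _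
      _ ≤ ∑ l, τ l ^ 2 * (1 - r l) := by
          refine sum_le_sum_mul_of_le_of_ge _ (τ j' ^ 2) (fun l hl => hsq (mem_Ici.1 hl))
            (fun l hl => hsq (not_le.1 (mt mem_Ici.2 hl)).le) (fun l => sub_nonneg.2 (hr1 l))
            (fun l => sub_le_self _ (hr0 l)) ?_
          rw [sum_sub_distrib, hr, Fin.card_Ici, sum_const, card_univ, Fintype.card_fin,
            nsmul_one, Nat.cast_sub (hjm.trans hmd.le)]
  calc ∑ l : Fin d, (if m ≤ (l : ℕ) then τ l else 0) ^ 2 * r l ≤ τ m' ^ 2 * j := head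
    _ ≤ τ m' ^ 2 * (ε * (m + 1 - j : ℕ)) := mul_le_mul_of_nonneg_left hεjm (sq_nonneg _)
    _ = ε * ((m + 1 - j : ℕ) * τ m' ^ 2) := by ring
    _ ≤ ε * ∑ l, τ l ^ 2 * (1 - r l) := mul_le_mul_of_nonneg_left tail hε

theorem stmt7_general {n d j : ℕ} (A : Matrix (Fin n) (Fin d) ℝ)
    (U : Matrix (Fin n) (Fin n) ℝ) (V : Matrix (Fin d) (Fin d) ℝ) (σ : ℕ → ℝ)
    (hU : Uᵀ * U = 1) (hV : Vᵀ * V = 1)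
    (hσ0 : ∀ i, i < min n d → 0 ≤ σ i)
    (hσa : ∀ i i', i ≤ i' → i' < min n d → σ i' ≤ σ i)
    (hA : A = U * svdDiag n d σ * Vᵀ)
    (ε : ℝ) (hε : 0 < ε)
    (m : ℕ) (hm1 : j + ⌈(j : ℝ) / ε⌉₊ - 1 ≤ m) (hm2 : m + 1 ≤ min n d)
    (X : Matrix (Fin d) (Fin j) ℝ) (hX : Xᵀ * X = 1)
    (Y : Matrix (Fin d) (Fin (d - j)) ℝ) (hY : Yᵀ * Y = 1)
    (hcomp : colSpace Y = (colSpace X)ᗮ) :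
    0 ≤ frobSq (A * X * Xᵀ - U * svdDiagTrunc n d m σ * Vᵀ * X * Xᵀ) ∧
      frobSq (A * X * Xᵀ - U * svdDiagTrunc n d m σ * Vᵀ * X * Xᵀ) ≤
        ε * frobSq (A * Y) := by
  refine ⟨frobSq_nonneg _, ?_⟩
  have hjm := le_of_add_ceil_div_sub_one_le hε hm1
  have hmd : m < d := by omega
  have hXY := mul_transpose_add_mul_transpose_eq_one (by omega) hX hY
    (transpose_mul_eq_zero_of_colSpace_le_orthogonal hcomp.le)
  have hrows := sum_sq_add_sum_sq_eq_one hV hXY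
  have hVt : (Vᵀ)ᵀ * Vᵀ = 1 := by simpa using mul_eq_one_comm.1 hV
  have hLHS : A * X * Xᵀ - U * svdDiagTrunc n d m σ * Vᵀ * X * Xᵀ =
      U * ((svdDiag n d σ - svdDiagTrunc n d m σ) * (Vᵀ * X)) * Xᵀ := by
    simp only [hA, Matrix.sub_mul, Matrix.mul_sub, Matrix.mul_assoc]
  have hRHS : A * Y = U * (svdDiag n d σ * (Vᵀ * Y)) := by simp only [hA, Matrix.mul_assoc]
  rw [hLHS, hRHS, frobSq_mul_transpose_of_transpose_mul_self_eq_one hX,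
    frobSq_mul_of_transpose_mul_self_eq_one hU, frobSq_mul_of_transpose_mul_self_eq_one hU,
    svdDiag_sub_svdDiagTrunc, frobSq_svdDiag_mul, frobSq_svdDiag_mul]
  convert sum_sq_mul_le_of_antitone hε.le hjm hmd (le_mul_of_add_ceil_div_sub_one_le hε hm1)
    (ite_lt_nonneg hσ0) (antitone_ite_lt hσ0 hσa)
    (fun l => sum_nonneg fun k _ => sq_nonneg ((Vᵀ * X) l k))
    (fun l => (le_add_of_nonneg_right (sum_nonneg fun k _ => sq_nonneg ((Vᵀ * Y) l k))).trans_eq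
      (hrows l))
    ((frobSq_mul_of_transpose_mul_self_eq_one hVt X).trans (frobSq_of_transpose_mul_self_eq_one hX))
    using 3 with l _ l
  · split_ifs <;> rfl
  · rw [← hrows l, add_sub_cancel_left]

/-- with `A = U Σ Vᵀ` an SVD, `ε > 0`, `1 ≤ j ≤ d-1`,
`j + ⌈j/ε⌉ - 1 ≤ m ≤ min(n,d) - 1`, `X ∈ ℝ^{d×j}` with orthonormal columns and
`Y ∈ ℝ^{d×(d-j)}` with orthonormal columns spanning the orthogonal complement of the
column space of `X`: `0 ≤ ‖AXXᵀ - A^(m)XXᵀ‖_F² ≤ ε·‖AY‖_F²`. -/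
theorem stmt7 {n d j : ℕ} (A : Matrix (Fin n) (Fin d) ℝ)
    (U : Matrix (Fin n) (Fin n) ℝ) (V : Matrix (Fin d) (Fin d) ℝ) (σ : ℕ → ℝ)
    (hU : Uᵀ * U = 1) (hV : Vᵀ * V = 1)
    (hσ0 : ∀ i, i < min n d → 0 ≤ σ i)
    (hσa : ∀ i i', i ≤ i' → i' < min n d → σ i' ≤ σ i)
    (hA : A = U * svdDiag n d σ * Vᵀ)
    (ε : ℝ) (hε : 0 < ε) (hj1 : 1 ≤ j) (hj2 : j < d)
    (m : ℕ) (hm1 : j + ⌈(j : ℝ) / ε⌉₊ - 1 ≤ m) (hm2 : m + 1 ≤ min n d)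
    (X : Matrix (Fin d) (Fin j) ℝ) (hX : Xᵀ * X = 1)
    (Y : Matrix (Fin d) (Fin (d - j)) ℝ) (hY : Yᵀ * Y = 1)
    (hcomp : colSpace Y = (colSpace X)ᗮ) :
    0 ≤ frobSq (A * X * Xᵀ - U * svdDiagTrunc n d m σ * Vᵀ * X * Xᵀ) ∧
      frobSq (A * X * Xᵀ - U * svdDiagTrunc n d m σ * Vᵀ * X * Xᵀ) ≤
        ε * frobSq (A * Y) :=
  stmt7_general A U V σ hU hV hσ0 hσa hA ε hε m hm1 hm2 X hX Y hY hcomp
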